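/- Suppose E(t) = 0 for the Lorenz piezoelectric energy, so that v_t = v_x = θ−η_x = θ_t+φ_x = η_t+φ = 0 on (0,L)×(0,∞), with v(0,t) = 0, θ(0,t) = θ(L,t) = 0, and initial data φ(·,0) = φ_t(·,0) = 0. Then v ≡ 0; φ satisfies φ_tt − (μ/ε₃)φ_xx + (μ/(ξε₃))φ = 0 with Neumann boundary conditions and zero initial data, hence φ ≡ 0; then θ_t = 0 and ξθ_xx − θ = 0 with θ(0)=θ(L)=0 gives θ ≡ 0; and the Lorenz gauge −ξθ_x + η = (ξε₃/μ)φ_t then gives η ≡ 0. -/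

import Mathlib

/-!
Vanishing of v_x together with v(0, t) = 0 gives v ≡ 0, after which φ solves the Klein–Gordon
equation φ_tt = (μ/ε₃) φ_xx - (μ/(ξ ε₃)) φ with Neumann data and zero Cauchy data. Its energy
density e = φ_t² + (μ/ε₃) φ_x² + (μ/(ξ ε₃)) φ² satisfies e_t = ((2μ/ε₃) φ_t φ_x)_x, so by the
divergence theorem on [0, L] × [0, T] and the vanishing of the flux at x = 0, L, the energy at
time T equals the (zero) initial energy; hence φ ≡ 0. The gauge condition then reads η = ξ θ_x,
and with θ = η_x this gives θ = ξ θ_xx with Dirichlet data. Integrating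
(θ θ_x)_x = θ_x² + θ²/ξ over [0, L] forces θ ≡ 0, and finally η = ξ θ_x ≡ 0.
-/

open Set

open Function MeasureTheory

/-- Partial derivative in time (second variable). -/
noncomputable def pt (f : ℝ → ℝ → ℝ) (x t : ℝ) : ℝ := deriv (fun s => f x s) t

/-- Partial derivative in space (first variable). -/
noncomputable def px (f : ℝ → ℝ → ℝ) (x t : ℝ) : ℝ := deriv (fun y => f y t) x

section PartialDerivatives

variable {f : ℝ → ℝ → ℝ} {x t : ℝ}

theorem hasDerivAt_px_fderiv (hf : DifferentiableAt ℝ (uncurry f) (x, t)) :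
    HasDerivAt (fun y => f y t) (fderiv ℝ (uncurry f) (x, t) (1, 0)) x :=
  HasFDerivAt.comp_hasDerivAt (l := uncurry f) x hf.hasFDerivAt
    ((hasDerivAt_id x).prodMk (hasDerivAt_const x t))

theorem hasDerivAt_pt_fderiv (hf : DifferentiableAt ℝ (uncurry f) (x, t)) :
    HasDerivAt (fun s => f x s) (fderiv ℝ (uncurry f) (x, t) (0, 1)) t :=
  HasFDerivAt.comp_hasDerivAt (l := uncurry f) t hf.hasFDerivAt
    ((hasDerivAt_const t x).prodMk (hasDerivAt_id t))

theorem px_eq_fderiv (hf : DifferentiableAt ℝ (uncurry f) (x, t)) :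
    px f x t = fderiv ℝ (uncurry f) (x, t) (1, 0) :=
  (hasDerivAt_px_fderiv hf).deriv

theorem pt_eq_fderiv (hf : DifferentiableAt ℝ (uncurry f) (x, t)) :
    pt f x t = fderiv ℝ (uncurry f) (x, t) (0, 1) :=
  (hasDerivAt_pt_fderiv hf).deriv

theorem hasDerivAt_px (hf : DifferentiableAt ℝ (uncurry f) (x, t)) :
    HasDerivAt (fun y => f y t) (px f x t) x :=
  px_eq_fderiv hf ▸ hasDerivAt_px_fderiv hf

theorem hasDerivAt_pt (hf : DifferentiableAt ℝ (uncurry f) (x, t)) :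
    HasDerivAt (fun s => f x s) (pt f x t) t :=
  pt_eq_fderiv hf ▸ hasDerivAt_pt_fderiv hf

theorem uncurry_px_eq_fderiv (hf : Differentiable ℝ (uncurry f)) :
    uncurry (px f) = fun p => fderiv ℝ (uncurry f) p (1, 0) :=
  funext fun p => px_eq_fderiv (hf p)

theorem uncurry_pt_eq_fderiv (hf : Differentiable ℝ (uncurry f)) :
    uncurry (pt f) = fun p => fderiv ℝ (uncurry f) p (0, 1) :=
  funext fun p => pt_eq_fderiv (hf p)

theorem ContDiff.uncurry_px {m n : WithTop ℕ∞} (hf : ContDiff ℝ n (uncurry f)) (hmn : m + 1 ≤ n) :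
    ContDiff ℝ m (uncurry (px f)) := by
  rw [uncurry_px_eq_fderiv (hf.differentiable fun h => by simp [h] at hmn)]
  exact (hf.fderiv_right hmn).clm_apply contDiff_const

theorem ContDiff.uncurry_pt {m n : WithTop ℕ∞} (hf : ContDiff ℝ n (uncurry f)) (hmn : m + 1 ≤ n) :
    ContDiff ℝ m (uncurry (pt f)) := by
  rw [uncurry_pt_eq_fderiv (hf.differentiable fun h => by simp [h] at hmn)]
  exact (hf.fderiv_right hmn).clm_apply contDiff_const

theorem pt_px_eq_px_pt (hf : ContDiff ℝ 2 (uncurry f)) : pt (px f) x t = px (pt f) x t := by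
  have hd : Differentiable ℝ (uncurry f) := hf.differentiable (by norm_num)
  have hdd : DifferentiableAt ℝ (fderiv ℝ (uncurry f)) (x, t) :=
    (hf.fderiv_right (m := 1) (by norm_num)).differentiable (by norm_num) _
  rw [pt_eq_fderiv ((hf.uncurry_px (m := 1) (by norm_num)).differentiable (by norm_num) _),
    px_eq_fderiv ((hf.uncurry_pt (m := 1) (by norm_num)).differentiable (by norm_num) _),
    uncurry_px_eq_fderiv hd, uncurry_pt_eq_fderiv hd,
    fderiv_clm_apply hdd (differentiableAt_const _),
    fderiv_clm_apply hdd (differentiableAt_const _)]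
  simpa using (hf.contDiffAt.isSymmSndFDerivAt (by simp)) (0, 1) (1, 0)

theorem eq_of_px_eq_zero (hf : Differentiable ℝ (uncurry f)) {a b : ℝ}
    (h : ∀ y ∈ Icc a b, px f y t = 0) : ∀ y ∈ Icc a b, f y t = f a t :=
  constant_of_has_deriv_right_zero (hf.continuous.uncurry_right t).continuousOn
    fun y hy => h y (Ico_subset_Icc_self hy) ▸ (hasDerivAt_px (hf (y, t))).hasDerivWithinAt

theorem px_eq_mul_px_px_of_eq_mul_px {g : ℝ → ℝ → ℝ} {c a b : ℝ}
    (hf : DifferentiableAt ℝ (uncurry (px f)) (x, t))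
    (h : ∀ y ∈ Icc a b, g y t = c * px f y t) (hx : x ∈ Ioo a b) :
    px g x t = c * px (px f) x t := by
  have hg : (fun y => g y t) =ᶠ[nhds x] fun y => c * px f y t :=
    Filter.eventuallyEq_of_mem (Icc_mem_nhds hx.1 hx.2) h
  rw [px, hg.deriv_eq, deriv_const_mul _ (hasDerivAt_px hf).differentiableAt]
  rfl

end PartialDerivatives

theorem integral_sub_integral_eq_of_pt_eq_px {e w : ℝ → ℝ → ℝ} {a b c d : ℝ}
    (he : ContDiff ℝ 1 (uncurry e)) (hw : ContDiff ℝ 1 (uncurry w))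
    (h : ∀ x ∈ uIcc a b, ∀ t ∈ uIcc c d, pt e x t = px w x t) :
    (∫ x in a..b, e x d) - ∫ x in a..b, e x c = (∫ t in c..d, w b t) - ∫ t in c..d, w a t := by
  have hed : Differentiable ℝ (uncurry e) := he.differentiable one_ne_zero
  have hwd : Differentiable ℝ (uncurry w) := hw.differentiable one_ne_zero
  have hdiv := integral2_divergence_prod_of_hasFDerivAt (-uncurry w) (uncurry e)
    (fun p => -fderiv ℝ (uncurry w) p) (fderiv ℝ (uncurry e)) a c b d
    hw.continuous.neg.continuousOn he.continuous.continuousOn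
    (fun p _ => (hwd p).hasFDerivAt.neg) (fun p _ => (hed p).hasFDerivAt)
    ((((hw.continuous_fderiv one_ne_zero).clm_apply continuous_const).neg.add
      ((he.continuous_fderiv one_ne_zero).clm_apply continuous_const)).continuousOn
        |>.integrableOn_compact (isCompact_uIcc.prod isCompact_uIcc))
  have hzero : (∫ x in a..b, ∫ t in c..d,
      (-fderiv ℝ (uncurry w) (x, t)) (1, 0) + fderiv ℝ (uncurry e) (x, t) (0, 1)) = 0 := by
    refine (intervalIntegral.integral_congr fun x hx => ?_).trans intervalIntegral.integral_zero
    refine (intervalIntegral.integral_congr fun t ht => ?_).trans intervalIntegral.integral_zero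
    simp [← px_eq_fderiv (hwd _), ← pt_eq_fderiv (hed _), h x hx t ht]
  simp only [hzero, Pi.neg_apply, uncurry_apply_pair, intervalIntegral.integral_neg] at hdiv
  linarith

theorem eqOn_zero_of_nonneg_of_integral_eq_zero {f : ℝ → ℝ} {a b : ℝ} (hab : a < b)
    (hf : ContinuousOn f (Icc a b)) (hf₀ : ∀ x ∈ Icc a b, 0 ≤ f x)
    (hint : ∫ x in a..b, f x = 0) : EqOn f 0 (Icc a b) := by
  rw [intervalIntegral.integral_of_le hab.le, integral_eq_zero_iff_of_nonneg_ae
    ((ae_restrict_mem measurableSet_Ioc).mono fun x hx => hf₀ x (Ioc_subset_Icc_self hx))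
    (hf.integrableOn_Icc.mono_set Ioc_subset_Icc_self),
    Measure.restrict_congr_set Ioc_ae_eq_Icc] at hint
  exact Measure.eqOn_Icc_of_ae_eq volume hab.ne hint hf continuousOn_const

theorem deriv_eq_zero_of_eqOn_zero {f : ℝ → ℝ} {s : Set ℝ} {x : ℝ} (hs : UniqueDiffWithinAt ℝ s x)
    (hx : x ∈ s) (hf : DifferentiableAt ℝ f x) (h : EqOn f 0 s) : deriv f x = 0 :=
  hs.eq_deriv s hf.hasDerivAt.hasDerivWithinAt ((hasDerivWithinAt_const x s 0).congr h (h hx))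

section KleinGordon

noncomputable def kleinGordonEnergy (c k : ℝ) (φ : ℝ → ℝ → ℝ) (x t : ℝ) : ℝ :=
  pt φ x t ^ 2 + c * px φ x t ^ 2 + k * φ x t ^ 2

noncomputable def kleinGordonFlux (c : ℝ) (φ : ℝ → ℝ → ℝ) (x t : ℝ) : ℝ :=
  2 * c * (pt φ x t * px φ x t)

variable {c k : ℝ} {φ : ℝ → ℝ → ℝ}

theorem contDiff_kleinGordonEnergy (hφ : ContDiff ℝ 2 (uncurry φ)) :
    ContDiff ℝ 1 (uncurry (kleinGordonEnergy c k φ)) :=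
  ((((hφ.uncurry_pt le_rfl).pow 2).add (contDiff_const.mul ((hφ.uncurry_px le_rfl).pow 2))).add
    (contDiff_const.mul ((hφ.of_le one_le_two).pow 2)) :)

theorem contDiff_kleinGordonFlux (hφ : ContDiff ℝ 2 (uncurry φ)) :
    ContDiff ℝ 1 (uncurry (kleinGordonFlux c φ)) :=
  (contDiff_const.mul ((hφ.uncurry_pt (m := 1) le_rfl).mul (hφ.uncurry_px (m := 1) le_rfl)) :)

theorem pt_kleinGordonEnergy_eq_px_kleinGordonFlux (hφ : ContDiff ℝ 2 (uncurry φ)) {x t : ℝ}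
    (heq : pt (pt φ) x t = c * px (px φ) x t - k * φ x t) :
    pt (kleinGordonEnergy c k φ) x t = px (kleinGordonFlux c φ) x t := by
  have hφ' : Differentiable ℝ (uncurry φ) := hφ.differentiable two_ne_zero
  have hpt := (hφ.uncurry_pt (m := 1) le_rfl).differentiable one_ne_zero (x, t)
  have hpx := (hφ.uncurry_px (m := 1) le_rfl).differentiable one_ne_zero (x, t)
  have het : HasDerivAt (fun s => kleinGordonEnergy c k φ x s)
      (2 * pt φ x t * pt (pt φ) x t + c * (2 * px φ x t * pt (px φ) x t)
        + k * (2 * φ x t * pt φ x t)) t :=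
    ((((hasDerivAt_pt hpt).pow 2).add (((hasDerivAt_pt hpx).pow 2).const_mul c)).add
      (((hasDerivAt_pt (hφ' (x, t))).pow 2).const_mul k)).congr_deriv (by ring)
  have hwx : HasDerivAt (fun y => kleinGordonFlux c φ y t)
      (2 * c * (px (pt φ) x t * px φ x t + pt φ x t * px (px φ) x t)) x :=
    ((hasDerivAt_px hpt).mul (hasDerivAt_px hpx)).const_mul (2 * c)
  rw [pt, px, het.deriv, hwx.deriv, heq, pt_px_eq_px_pt hφ]
  ring

theorem eq_zero_of_kleinGordon (hc : 0 ≤ c) (hk : 0 < k) {L : ℝ} (hL : 0 < L)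
    (hφ : ContDiff ℝ 2 (uncurry φ))
    (heq : ∀ x ∈ Icc 0 L, ∀ t, 0 ≤ t → pt (pt φ) x t = c * px (px φ) x t - k * φ x t)
    (hbc : ∀ t, 0 ≤ t → px φ 0 t = 0 ∧ px φ L t = 0)
    (hic : ∀ x ∈ Icc 0 L, φ x 0 = 0 ∧ pt φ x 0 = 0) :
    ∀ x ∈ Icc 0 L, ∀ t, 0 ≤ t → φ x t = 0 ∧ pt φ x t = 0 := by
  have hφ' : Differentiable ℝ (uncurry φ) := hφ.differentiable two_ne_zero
  have hinit : EqOn (fun x => kleinGordonEnergy c k φ x 0) 0 (uIcc 0 L) := by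
    intro x hx
    rw [uIcc_of_le hL.le] at hx
    have hpx : px φ x 0 = 0 := deriv_eq_zero_of_eqOn_zero (uniqueDiffOn_Icc hL x hx) hx
      (hasDerivAt_px (hφ' (x, 0))).differentiableAt fun y hy => (hic y hy).1
    simp [kleinGordonEnergy, hpx, hic x hx]
  intro x hx T hT
  have hcons := integral_sub_integral_eq_of_pt_eq_px
    (contDiff_kleinGordonEnergy (c := c) (k := k) hφ)
    (contDiff_kleinGordonFlux (c := c) hφ) (a := 0) (b := L) (c := 0) (d := T)
    fun y hy s hs => pt_kleinGordonEnergy_eq_px_kleinGordonFlux hφ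
      (heq y (by rwa [uIcc_of_le hL.le] at hy) s (by rw [uIcc_of_le hT] at hs; exact hs.1))
  have hflux : ∀ s ∈ uIcc 0 T, kleinGordonFlux c φ 0 s = 0 ∧ kleinGordonFlux c φ L s = 0 := by
    intro s hs
    rw [uIcc_of_le hT] at hs
    simp [kleinGordonFlux, hbc s hs.1]
  rw [intervalIntegral.integral_congr hinit,
    intervalIntegral.integral_congr fun s hs => (hflux s hs).1,
    intervalIntegral.integral_congr fun s hs => (hflux s hs).2] at hcons
  have hE : kleinGordonEnergy c k φ x T = 0 := by
    refine eqOn_zero_of_nonneg_of_integral_eq_zero (f := fun y => kleinGordonEnergy c k φ y T) hL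
      ?_ (fun y _ => by unfold kleinGordonEnergy; positivity)
      (by simpa using hcons) hx
    exact ((contDiff_kleinGordonEnergy hφ).continuous.uncurry_right T).continuousOn
  unfold kleinGordonEnergy at hE
  have hpt : pt φ x T ^ 2 = 0 := by
    nlinarith [sq_nonneg (pt φ x T), mul_nonneg hc (sq_nonneg (px φ x T)),
      mul_nonneg hk.le (sq_nonneg (φ x T))]
  have hkφ : k * φ x T ^ 2 = 0 := by
    nlinarith [sq_nonneg (pt φ x T), mul_nonneg hc (sq_nonneg (px φ x T)),
      mul_nonneg hk.le (sq_nonneg (φ x T))]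
  exact ⟨by simpa [hk.ne'] using hkφ, pow_eq_zero_iff two_ne_zero |>.1 hpt⟩

end KleinGordon

theorem eqOn_zero_of_eq_mul_deriv_deriv {g : ℝ → ℝ} {ξ a b : ℝ} (hξ : 0 < ξ) (hab : a < b)
    (hg : Differentiable ℝ g) (hg' : Differentiable ℝ (deriv g))
    (heq : ∀ x ∈ Ioo a b, g x = ξ * deriv (deriv g) x) (ha : g a = 0) (hb : g b = 0) :
    EqOn g 0 (Icc a b) := by
  have hq : Continuous fun x => deriv g x ^ 2 + g x ^ 2 / ξ :=
    (hg'.continuous.pow 2).add ((hg.continuous.pow 2).div_const ξ)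
  have hint : ∫ x in a..b, deriv g x ^ 2 + g x ^ 2 / ξ = 0 := by
    rw [intervalIntegral.integral_eq_sub_of_hasDerivAt_of_le hab.le
      (hg.continuous.mul hg'.continuous).continuousOn
      (fun x hx => ((hg x).hasDerivAt.mul (hg' x).hasDerivAt).congr_deriv ?_)
      (hq.intervalIntegrable a b)]
    · simp [ha, hb]
    · rw [heq x hx]; field_simp
  intro x hx
  have hqx := eqOn_zero_of_nonneg_of_integral_eq_zero hab hq.continuousOn
    (fun y _ => by positivity) hint hx
  have : g x ^ 2 / ξ = 0 := by
    simp only [Pi.zero_apply] at hqx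
    nlinarith [sq_nonneg (deriv g x), div_nonneg (sq_nonneg (g x)) hξ.le]
  simpa [hξ.ne'] using this

theorem stmt_16_general (γ μ ξ ε₃ L : ℝ)
    (hμ : 0 < μ) (hξ : 0 < ξ)
    (hε : 0 < ε₃) (hL : 0 < L)
    (v φ θ η : ℝ → ℝ → ℝ)
    (hv : ContDiff ℝ 2 (Function.uncurry v)) (hφ : ContDiff ℝ 2 (Function.uncurry φ))
    (hθ : ContDiff ℝ 2 (Function.uncurry θ))
    -- vanishing of all energy densities:
    (hvx : ∀ x ∈ Icc (0:ℝ) L, ∀ t : ℝ, 0 ≤ t → px v x t = 0)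
    (hB : ∀ x ∈ Icc (0:ℝ) L, ∀ t : ℝ, 0 ≤ t → θ x t - px η x t = 0)
    -- boundary conditions:
    (bc1 : ∀ t : ℝ, 0 ≤ t → v 0 t = 0)
    (bc2 : ∀ t : ℝ, 0 ≤ t → θ 0 t = 0 ∧ θ L t = 0)
    (bc3 : ∀ t : ℝ, 0 ≤ t → px φ 0 t = 0 ∧ px φ L t = 0)
    -- zero initial data for φ:
    (ic : ∀ x ∈ Icc (0:ℝ) L, φ x 0 = 0 ∧ pt φ x 0 = 0)
    -- the φ-equation (Klein–Gordon) and θ-equation of the Lorenz system: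
    (eqφ : ∀ x ∈ Icc (0:ℝ) L, ∀ t : ℝ, 0 ≤ t →
      pt (pt φ) x t - (μ / ε₃) * px (px φ) x t + (μ / (ξ * ε₃)) * φ x t
        - (γ * μ / (ξ * ε₃ ^ 2)) * px v x t = 0)
    -- Lorenz gauge condition:
    (gauge : ∀ x ∈ Icc (0:ℝ) L, ∀ t : ℝ, 0 ≤ t →
      -ξ * px θ x t + η x t = (ξ * ε₃ / μ) * pt φ x t) :
    ∀ x ∈ Icc (0:ℝ) L, ∀ t : ℝ, 0 ≤ t →
      v x t = 0 ∧ φ x t = 0 ∧ θ x t = 0 ∧ η x t = 0 := by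
  have hφ0 := eq_zero_of_kleinGordon (div_pos hμ hε).le (div_pos hμ (mul_pos hξ hε)) hL hφ
    (fun x hx t ht => by
      have := eqφ x hx t ht
      rw [hvx x hx t ht, mul_zero, sub_zero] at this
      linarith) bc3 ic
  have hη : ∀ x ∈ Icc 0 L, ∀ t, 0 ≤ t → η x t = ξ * px θ x t := fun x hx t ht => by
    have := gauge x hx t ht
    rw [(hφ0 x hx t ht).2, mul_zero] at this
    linarith
  have hθx : Differentiable ℝ (uncurry (px θ)) :=
    (hθ.uncurry_px (m := 1) le_rfl).differentiable one_ne_zero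
  intro x hx t ht
  have hθ0 : EqOn (fun y => θ y t) 0 (Icc 0 L) :=
    eqOn_zero_of_eq_mul_deriv_deriv hξ hL
      (fun y => (hasDerivAt_px (hθ.differentiable two_ne_zero (y, t))).differentiableAt)
      (fun y => (hasDerivAt_px (hθx (y, t))).differentiableAt)
      (fun y hy => by
        rw [sub_eq_zero.1 (hB y (Ioo_subset_Icc_self hy) t ht),
          px_eq_mul_px_px_of_eq_mul_px (hθx (y, t)) (fun z hz => hη z hz t ht) hy]
        rfl)
      (bc2 t ht).1 (bc2 t ht).2
  have hv0 := eq_of_px_eq_zero (hv.differentiable two_ne_zero) (fun y hy => hvx y hy t ht) x hx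
  refine ⟨hv0.trans (bc1 t ht), (hφ0 x hx t ht).1, hθ0 hx, ?_⟩
  rw [hη x hx t ht, px, deriv_eq_zero_of_eqOn_zero (uniqueDiffOn_Icc hL x hx) hx
    (hasDerivAt_px (hθ.differentiable two_ne_zero (x, t))).differentiableAt hθ0, mul_zero]

/-- vanishing energy forces all state variables of the Lorenz
piezoelectric system to vanish: if v_t = v_x = θ−η_x = θ_t+φ_x = η_t+φ = 0 with the
stated boundary and (zero) initial conditions, then v ≡ φ ≡ θ ≡ η ≡ 0. -/
theorem stmt_16 (ρ α γ μ ξ ε₃ L b : ℝ)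
    (hρ : 0 < ρ) (hα : 0 < α) (hγ : 0 < γ) (hμ : 0 < μ) (hξ : 0 < ξ)
    (hε : 0 < ε₃) (hL : 0 < L) (hb : 0 ≤ b)
    (v φ θ η : ℝ → ℝ → ℝ)
    (hv : ContDiff ℝ 2 (Function.uncurry v)) (hφ : ContDiff ℝ 2 (Function.uncurry φ))
    (hθ : ContDiff ℝ 2 (Function.uncurry θ)) (hη : ContDiff ℝ 2 (Function.uncurry η))
    -- vanishing of all energy densities:
    (hvt : ∀ x ∈ Icc (0:ℝ) L, ∀ t : ℝ, 0 ≤ t → pt v x t = 0)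
    (hvx : ∀ x ∈ Icc (0:ℝ) L, ∀ t : ℝ, 0 ≤ t → px v x t = 0)
    (hB : ∀ x ∈ Icc (0:ℝ) L, ∀ t : ℝ, 0 ≤ t → θ x t - px η x t = 0)
    (hE1 : ∀ x ∈ Icc (0:ℝ) L, ∀ t : ℝ, 0 ≤ t → pt θ x t + px φ x t = 0)
    (hE2 : ∀ x ∈ Icc (0:ℝ) L, ∀ t : ℝ, 0 ≤ t → pt η x t + φ x t = 0)
    -- boundary conditions:
    (bc1 : ∀ t : ℝ, 0 ≤ t → v 0 t = 0)
    (bc2 : ∀ t : ℝ, 0 ≤ t → θ 0 t = 0 ∧ θ L t = 0)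
    (bc3 : ∀ t : ℝ, 0 ≤ t → px φ 0 t = 0 ∧ px φ L t = 0)
    -- zero initial data for φ:
    (ic : ∀ x ∈ Icc (0:ℝ) L, φ x 0 = 0 ∧ pt φ x 0 = 0)
    -- the φ-equation (Klein–Gordon) and θ-equation of the Lorenz system:
    (eqφ : ∀ x ∈ Icc (0:ℝ) L, ∀ t : ℝ, 0 ≤ t →
      pt (pt φ) x t - (μ / ε₃) * px (px φ) x t + (μ / (ξ * ε₃)) * φ x t
        - (γ * μ / (ξ * ε₃ ^ 2)) * px v x t = 0)
    (eqθ : ∀ x ∈ Icc (0:ℝ) L, ∀ t : ℝ, 0 ≤ t →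
      pt (pt θ) x t - (μ / ε₃) * px (px θ) x t + (μ / (ξ * ε₃)) * θ x t
        + b * (pt θ x t + px φ x t) = 0)
    -- Lorenz gauge condition:
    (gauge : ∀ x ∈ Icc (0:ℝ) L, ∀ t : ℝ, 0 ≤ t →
      -ξ * px θ x t + η x t = (ξ * ε₃ / μ) * pt φ x t) :
    ∀ x ∈ Icc (0:ℝ) L, ∀ t : ℝ, 0 ≤ t →
      v x t = 0 ∧ φ x t = 0 ∧ θ x t = 0 ∧ η x t = 0 :=
  stmt_16_general γ μ ξ ε₃ L hμ hξ hε hL v φ θ η hv hφ hθ hvx hB bc1 bc2 bc3 ic eqφ gauge
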